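/- arXiv:1508.06269 — 2 statements merged into one kernel-verified Lean document; each statement's English description precedes it below -/
import Mathlib

section
/- (Backward-forward construction yields a PBE.) Suppose for each t and each product belief π_t the fixed-point equation defining θ_t[π_t] has a solution: there exists γ̃_t such that for every player i and type x_t^i, γ̃_t^i(· | x_t^i) maximizes, over distributions γ_t^i(· | x_t^i) on A^i, the expectation E^{γ_t^i(·|x_t^i) γ̃_t^{-i}, π_t}[ R^i(X_t, A_t) + V_{t+1}^i(F(π_t, γ̃_t, A_t), X_{t+1}^i) | x_t^i ], with V defined by backward recursion from V_{T+1}^i ≡ 0. Define beliefs μ*_t and strategies β*_t by the forward recursion μ*_1 = ∏_i Q_1^i, β*_t^i(·|a_{1:t-1}, x_t^i) = θ_t^i[μ*_t[a_{1:t-1}]](·|x_t^i), μ*_{t+1}^i[a_{1:t}] = F̄(μ*_t^i[a_{1:t-1}], θ_t^i[μ*_t[a_{1:t-1}]], a_t). Then (β*, μ*) is a perfect Bayesian equilibrium: for every i, t, public history a_{1:t-1}, private history x_{1:t}^i, and alternative strategy β^i, E^{β*_{t:T} , μ*_t[a_{1:t-1}]}[ Σ_{n=t}^T R^i(X_n,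 A_n) | a_{1:t-1}, x_{1:t}^i ] ≥ E^{β^i_{t:T} β*^{-i}_{t:T}, μ*_t[a_{1:t-1}]}[ Σ_{n=t}^T R^i(X_n, A_n) | a_{1:t-1}, x_{1:t}^i ]. -/
open scoped Classical BigOperators
open Finset

noncomputable section

namespace SPBE

variable (N T : ℕ) (X A : Fin N → Type)
  [∀ i, Fintype (X i)] [∀ i, Fintype (A i)]
  [∀ i, Nonempty (X i)] [∀ i, Nonempty (A i)]
  (Q1 : ∀ i, X i → ℝ)
  (Qk : ℕ → ∀ i, X i → (∀ j, A j) → X i → ℝ)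
  (R : ∀ _ : Fin N, (∀ j, X j) → (∀ j, A j) → ℝ)
  (θ : ℕ → (∀ j, X j → ℝ) → ∀ j, X j → A j → ℝ)

/-- `π` is a vector of marginal beliefs (a product belief). -/
def IsBelief (π : ∀ j, X j → ℝ) : Prop :=
  ∀ j, (∀ x, 0 ≤ π j x) ∧ (∑ x, π j x) = 1

def KerStoch : Prop :=
  (∀ i, (∀ x, 0 ≤ Q1 i x) ∧ (∑ x, Q1 i x) = 1) ∧
  (∀ t i x a, (∀ x', 0 ≤ Qk t i x a x') ∧ (∑ x', Qk t i x a x') = 1)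

/-- The equilibrium generating function produces prescriptions that are probability
distributions at every (product) belief. -/
def ThetaStoch : Prop :=
  ∀ t π, IsBelief N X π → ∀ j x, (∀ b, 0 ≤ θ t π j x b) ∧ (∑ b, θ t π j x b) = 1

/-- One-player Bayes update `F̄` (kernel `Qk t'` is used for the belief at time `t'`). -/
def Fbar (t' : ℕ) (i : Fin N) (πi : X i → ℝ) (γrow : X i → ℝ) (av : ∀ j, A j) :
    X i → ℝ :=
  fun x' =>
    if 0 < ∑ x, πi x * γrow x then
      (∑ x, πi x * γrow x * Qk t' i x av x') / (∑ x, πi x * γrow x)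
    else ∑ x, πi x * Qk t' i x av x'

/-- Vector Bayes update `F(π, γ, a)` producing the belief at time `t'`. -/
def Fupd (t' : ℕ) (π : ∀ j, X j → ℝ) (γ : ∀ j, X j → A j → ℝ) (av : ∀ j, A j) :
    ∀ j, X j → ℝ :=
  fun j => Fbar N X A Qk t' j (π j) (fun x => γ j x (av j)) av

/-- The backward-recursive value functions `V_t^i(π, x^i)` associated with the
equilibrium generating function `θ` (periods are 0-based, `V_T ≡ 0`). -/
def V : ℕ → (∀ j, X j → ℝ) → ∀ i, X i → ℝ :=
  fun t π i xi =>
    if h : t < T then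
      ∑ x : ∀ j, X j, ∑ a : ∀ j, A j, ∑ xi' : X i,
        (if x i = xi then ∏ j ∈ univ.erase i, π j (x j) else 0) *
        (∏ j, θ t π j (x j) (a j)) *
        Qk (t + 1) i xi a xi' *
        (R i x a + V (t + 1) (Fupd N X A Qk (t + 1) π (θ t π) a) i xi')
    else 0
  termination_by t => T - t
  decreasing_by omega

/-- The stage objective of player `i` with own (possibly deviating) mixed action row `p`,
the others playing `θ_t[π]`, and the continuation evaluated through `V_{t+1}` with the
belief updated by the *equilibrium* prescriptions `θ_t[π]`. -/
def Obj (t : ℕ) (π : ∀ j, X j → ℝ) (i : Fin N) (xi : X i) (p : A i → ℝ) : ℝ :=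
  ∑ x : ∀ j, X j, ∑ a : ∀ j, A j, ∑ xi' : X i,
    (if x i = xi then ∏ j ∈ univ.erase i, π j (x j) else 0) *
    (p (a i) * ∏ j ∈ univ.erase i, θ t π j (x j) (a j)) *
    Qk (t + 1) i xi a xi' *
    (R i x a + V N T X A Qk R θ (t + 1) (Fupd N X A Qk (t + 1) π (θ t π) a) i xi')

/-- The fixed point property defining the equilibrium generating function `θ`:
at every period and every product belief, each player's prescription row maximizes
the stage objective against the others' prescriptions. -/
def FixedPoint : Prop :=
  ∀ t, t < T → ∀ π, IsBelief N X π → ∀ (i : Fin N) (xi : X i) (p : A i → ℝ),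
    (∀ b, 0 ≤ p b) → (∑ b, p b) = 1 →
    Obj N T X A Qk R θ t π i xi p ≤ Obj N T X A Qk R θ t π i xi (θ t π i xi)

/-- The forward belief recursion `μ*`: `μ*_0 = ∏ Q_1^i` and
`μ*_{t+1}[a_{1:t}] = F(μ*_t[a_{1:t-1}], θ_t[μ*_t], a_t)`. -/
def μstar : ℕ → (ℕ → ∀ j, A j) → ∀ j, X j → ℝ
  | 0, _ => fun j => Q1 j
  | (t + 1), a =>
      Fupd N X A Qk (t + 1) (μstar t a) (θ t (μstar t a)) (a t)

/-- Update a history function at one time point. -/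
def upd {α : Type*} (h : ℕ → α) (t : ℕ) (v : α) : ℕ → α :=
  fun s => if s = t then v else h s

/-- The expected continuation reward of player `i` from period `t` on, given the public
history `ah`, its own type history `xh`, the current joint type `xcur` (with
`xcur i = xh t`), when player `i` uses the history-based strategy `βi` and all other
players use the equilibrium strategies `β*` (i.e. `θ` applied to the forward beliefs). -/
def cont (i : Fin N)
    (βi : ℕ → (ℕ → ∀ j, A j) → (ℕ → X i) → A i → ℝ) :
    ℕ → (ℕ → ∀ j, A j) → (ℕ → X i) → (∀ j, X j) → ℝ :=
  fun t ah xh xcur =>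
    if h : t < T then
      ∑ a : ∀ j, A j, ∑ x' : ∀ j, X j,
        (βi t ah xh (a i) *
          ∏ j ∈ univ.erase i, θ t (μstar N X A Q1 Qk θ t ah) j (xcur j) (a j)) *
        (∏ j, Qk (t + 1) j (xcur j) a (x' j)) *
        (R i xcur a + cont i βi (t + 1) (upd ah t a) (upd xh (t + 1) (x' i)) x')
    else 0
  termination_by t => T - t
  decreasing_by omega

/-- The conditional expectation `E^{β^i β*^{-i}, μ}[ Σ_{n=t}^T R^i | a_{1:t-1}, x_{1:t}^i ]`:
the current types of the other players are drawn from the belief `μ^{-i}` and the game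
evolves forward by the kernels and strategies. -/
def contVal (i : Fin N)
    (βi : ℕ → (ℕ → ∀ j, A j) → (ℕ → X i) → A i → ℝ)
    (t : ℕ) (ah : ℕ → ∀ j, A j) (xh : ℕ → X i) (μ : ∀ j, X j → ℝ) : ℝ :=
  ∑ xcur : ∀ j, X j,
    (if xcur i = xh t then ∏ j ∈ univ.erase i, μ j (xcur j) else 0) *
    cont N T X A Q1 Qk R θ i βi t ah xh xcur

/-- Player `i`'s equilibrium strategy `β*^i`, as a history-based strategy. -/
def βeq (i : Fin N) : ℕ → (ℕ → ∀ j, A j) → (ℕ → X i) → A i → ℝ :=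
  fun t ah xh ai => θ t (μstar N X A Q1 Qk θ t ah) i (xh t) ai

/-!
Backward induction on `t`. Given player `i`'s own type, the others' current types drawn from
`μ*_t` and their actions drawn from `θ_t[μ*_t]` are independent across players, and by Bayes'
rule their next types are distributed as the updated belief `F(μ*_t, θ_t[μ*_t], a_t) = μ*_{t+1}`.
Hence, for any strategy of player `i`, the continuation reward at `μ*_t` is the one-period
`stageValue` of its current mixed action against its own continuation reward at `μ*_{t+1}`;
`Obj` is the same expression with `V_{t+1}` as continuation. For `β*` induction turns the
continuation into `V_{t+1}`, giving `V_t`; for any deviation it is at most `V_{t+1}`, and the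
fixed-point property bounds the resulting `Obj` by `V_t`.
-/

section Finite

variable {ι : Type*} [Fintype ι] [DecidableEq ι] {κ : ι → Type*} {S : Type*} [CommSemiring S]

theorem prod_apply_update (i : ι) (g : κ i → S) (f : ∀ j, κ j → S)
    (F : ∀ j, (κ j → S) → S) :
    ∏ j, F j (Function.update f i g j) = F i g * ∏ j ∈ univ.erase i, F j (f j) := by
  rw [← mul_prod_erase univ _ (mem_univ i), Function.update_self]
  congr 1
  exact prod_congr rfl fun j hj => by rw [Function.update_of_ne (ne_of_mem_erase hj)]

theorem sum_mul_prod_erase [∀ j, Fintype (κ j)] (i : ι) (g : κ i → S) (f : ∀ j, κ j → S) :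
    ∑ x : ∀ j, κ j, g (x i) * ∏ j ∈ univ.erase i, f j (x j)
      = (∑ y, g y) * ∏ j ∈ univ.erase i, ∑ y, f j y := by
  calc ∑ x : ∀ j, κ j, g (x i) * ∏ j ∈ univ.erase i, f j (x j)
      = ∑ x : ∀ j, κ j, ∏ j, Function.update f i g j (x j) :=
        sum_congr rfl fun x _ => (prod_apply_update i g f fun j φ => φ (x j)).symm
    _ = ∏ j, ∑ y, Function.update f i g j y := (Fintype.prod_sum _).symm
    _ = _ := prod_apply_update i g f fun j φ => ∑ y, φ y

theorem sum_ite_prod_erase_mul [∀ j, Fintype (κ j)] (i : ι) (y : κ i) (π f : ∀ j, κ j → S)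
    (g : κ i → S) :
    ∑ x : ∀ j, κ j, (if x i = y then ∏ j ∈ univ.erase i, π j (x j) else 0) *
        (g (x i) * ∏ j ∈ univ.erase i, f j (x j))
      = g y * ∏ j ∈ univ.erase i, ∑ z, π j z * f j z := by
  have h : ∀ x : ∀ j, κ j, (if x i = y then ∏ j ∈ univ.erase i, π j (x j) else 0) *
      (g (x i) * ∏ j ∈ univ.erase i, f j (x j))
        = (if x i = y then g (x i) else 0) * ∏ j ∈ univ.erase i, π j (x j) * f j (x j) := by
    intro x
    split_ifs <;> simp only [prod_mul_distrib, zero_mul]; ring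
  rw [sum_congr rfl fun x _ => h x,
    sum_mul_prod_erase i (fun z => if z = y then g z else 0) fun j z => π j z * f j z]
  simp

theorem sum_sum_kernel_mul_add {α β : Type*} [Fintype α] [Fintype β] (w r : α → S)
    (K : α → β → S) (c : β → S) (hK : ∀ x, ∑ y, K x y = 1) :
    ∑ x, ∑ y, w x * K x y * (r x + c y) = ∑ x, w x * r x + ∑ y, (∑ x, w x * K x y) * c y := by
  simp only [mul_add, sum_add_distrib]
  congr 1
  · refine sum_congr rfl fun x _ => ?_
    rw [← sum_mul, ← mul_sum, hK x, mul_one]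
  · rw [sum_comm]
    simp only [sum_mul]

theorem sum_mul_prod_erase_fiber [∀ j, Fintype (κ j)] (i : ι) (g : κ i → S)
    (μ : ∀ j, κ j → S) (H : κ i → (∀ j, κ j) → S) :
    ∑ x : ∀ j, κ j, g (x i) * (∏ j ∈ univ.erase i, μ j (x j)) * H (x i) x
      = ∑ y, g y * ∑ x : ∀ j, κ j,
          (if x i = y then ∏ j ∈ univ.erase i, μ j (x j) else 0) * H y x := by
  simp_rw [mul_sum, ite_mul, zero_mul, mul_ite, mul_zero]
  rw [sum_comm]
  refine sum_congr rfl fun x _ => ?_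
  simp [mul_assoc]

end Finite

def actionProb (t : ℕ) (π : ∀ j, X j → ℝ) (j : Fin N) (b : A j) : ℝ :=
  ∑ y, π j y * θ t π j y b

def stageValue (t : ℕ) (π : ∀ j, X j → ℝ) (i : Fin N) (xi : X i) (p : A i → ℝ)
    (W : (∀ j, A j) → X i → ℝ) : ℝ :=
  ∑ a : ∀ j, A j, p (a i) *
    ((∑ x : ∀ j, X j, (if x i = xi then ∏ j ∈ univ.erase i, π j (x j) else 0) *
        (∏ j ∈ univ.erase i, θ t π j (x j) (a j)) * R i x a)
      + (∏ j ∈ univ.erase i, actionProb N X A θ t π j (a j)) *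
        ∑ xi' : X i, Qk (t + 1) i xi a xi' * W a xi')

section Beliefs

omit [∀ i, Fintype (A i)] [∀ i, Nonempty (X i)] [∀ i, Nonempty (A i)]
variable {N X A Q1 Qk θ}

theorem mul_Fbar (t' : ℕ) (i : Fin N) {πi γ : X i → ℝ} (hπ : ∀ x, 0 ≤ πi x)
    (hγ : ∀ x, 0 ≤ γ x) (av : ∀ j, A j) (x' : X i) :
    (∑ x, πi x * γ x) * Fbar N X A Qk t' i πi γ av x' = ∑ x, πi x * γ x * Qk t' i x av x' := by
  unfold Fbar
  split_ifs with hpos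
  · exact mul_div_cancel₀ _ hpos.ne'
  · have hnonneg : ∀ x ∈ univ, 0 ≤ πi x * γ x := fun x _ => mul_nonneg (hπ x) (hγ x)
    have hzero : ∑ x, πi x * γ x = 0 := le_antisymm (not_lt.1 hpos) (sum_nonneg hnonneg)
    rw [hzero, zero_mul, eq_comm]
    exact sum_eq_zero fun x hx => by
      rw [(sum_eq_zero_iff_of_nonneg hnonneg).1 hzero x hx, zero_mul]

theorem isBelief_Fupd (hK : KerStoch N X A Q1 Qk) {π : ∀ j, X j → ℝ} (hπ : IsBelief N X π)
    {γ : ∀ j, X j → A j → ℝ} (hγ : ∀ j x b, 0 ≤ γ j x b) (t' : ℕ) (av : ∀ j, A j) :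
    IsBelief N X (Fupd N X A Qk t' π γ av) := by
  intro j
  obtain ⟨hπ0, hπ1⟩ := hπ j
  have hQ := fun x => hK.2 t' j x av
  by_cases hpos : 0 < ∑ x, π j x * γ j x (av j)
  · simp only [Fupd, Fbar, if_pos hpos]
    refine ⟨fun x' => div_nonneg (sum_nonneg fun x _ =>
      mul_nonneg (mul_nonneg (hπ0 x) (hγ j x _)) ((hQ x).1 x')) hpos.le, ?_⟩
    rw [← sum_div, sum_comm]
    simp_rw [← mul_sum, (hQ _).2, mul_one]
    exact div_self hpos.ne'
  · simp only [Fupd, Fbar, if_neg hpos]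
    refine ⟨fun x' => sum_nonneg fun x _ => mul_nonneg (hπ0 x) ((hQ x).1 x'), ?_⟩
    rw [sum_comm]
    simp_rw [← mul_sum, (hQ _).2, mul_one, hπ1]

theorem μstar_congr {t : ℕ} {ah ah' : ℕ → ∀ j, A j} (h : ∀ s < t, ah s = ah' s) :
    μstar N X A Q1 Qk θ t ah = μstar N X A Q1 Qk θ t ah' := by
  induction t with
  | zero => rfl
  | succ t ih =>
    simp only [μstar, ih fun s hs => h s (Nat.lt_succ_of_lt hs), h t (Nat.lt_succ_self t)]

theorem upd_self {α : Type*} (h : ℕ → α) (t : ℕ) (v : α) : upd h t v t = v := if_pos rfl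

theorem μstar_succ_upd (t : ℕ) (ah : ℕ → ∀ j, A j) (a : ∀ j, A j) :
    μstar N X A Q1 Qk θ (t + 1) (upd ah t a)
      = Fupd N X A Qk (t + 1) (μstar N X A Q1 Qk θ t ah) (θ t (μstar N X A Q1 Qk θ t ah)) a := by
  rw [μstar, upd_self, μstar_congr (ah := upd ah t a) (ah' := ah) fun s hs => if_neg hs.ne]

theorem sum_ite_prod_mul_prod_θ (t : ℕ) (π : ∀ j, X j → ℝ) (i : Fin N) (xi : X i)
    (a : ∀ j, A j) :
    ∑ x : ∀ j, X j, (if x i = xi then ∏ j ∈ univ.erase i, π j (x j) else 0) *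
        ∏ j ∈ univ.erase i, θ t π j (x j) (a j)
      = ∏ j ∈ univ.erase i, actionProb N X A θ t π j (a j) := by
  simpa [actionProb] using
    sum_ite_prod_erase_mul i xi π (fun j z => θ t π j z (a j)) fun _ => (1 : ℝ)

theorem sum_ite_prod_mul_prod_θ_mul_prod_Qk {t : ℕ} {π : ∀ j, X j → ℝ} (hπ : ∀ j y, 0 ≤ π j y)
    (hθ : ∀ j y b, 0 ≤ θ t π j y b) (i : Fin N) (xi : X i) (a : ∀ j, A j) (x' : ∀ j, X j) :
    ∑ x : ∀ j, X j, (if x i = xi then ∏ j ∈ univ.erase i, π j (x j) else 0) *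
        (∏ j ∈ univ.erase i, θ t π j (x j) (a j)) * ∏ j, Qk (t + 1) j (x j) a (x' j)
      = Qk (t + 1) i xi a (x' i) * ∏ j ∈ univ.erase i,
          actionProb N X A θ t π j (a j) * Fupd N X A Qk (t + 1) π (θ t π) a j (x' j) := by
  have h : ∀ x : ∀ j, X j, (if x i = xi then ∏ j ∈ univ.erase i, π j (x j) else 0) *
      (∏ j ∈ univ.erase i, θ t π j (x j) (a j)) * ∏ j, Qk (t + 1) j (x j) a (x' j)
        = (if x i = xi then ∏ j ∈ univ.erase i, π j (x j) else 0) *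
          (Qk (t + 1) i (x i) a (x' i) *
            ∏ j ∈ univ.erase i, θ t π j (x j) (a j) * Qk (t + 1) j (x j) a (x' j)) := by
    intro x
    rw [← mul_prod_erase univ _ (mem_univ i), prod_mul_distrib]
    ring
  refine (sum_congr rfl fun x _ => h x).trans <| (sum_ite_prod_erase_mul i xi π
    (fun j z => θ t π j z (a j) * Qk (t + 1) j z a (x' j))
    fun z => Qk (t + 1) i z a (x' i)).trans ?_
  congr 1
  refine prod_congr rfl fun j _ => ?_
  rw [actionProb, Fupd, mul_Fbar _ _ (hπ j) (fun y => hθ j y (a j))]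
  simp only [mul_assoc]

end Beliefs

section

omit [∀ i, Nonempty (X i)] [∀ i, Nonempty (A i)]
variable {N T X A Q1 Qk R θ}

theorem isBelief_μstar (hK : KerStoch N X A Q1 Qk) (hθ : ThetaStoch N X A θ) (t : ℕ)
    (ah : ℕ → ∀ j, A j) : IsBelief N X (μstar N X A Q1 Qk θ t ah) := by
  induction t with
  | zero => exact hK.1
  | succ t ih => exact isBelief_Fupd hK ih (fun j x => (hθ t _ ih j x).1) _ _

theorem cont_of_lt (i : Fin N) (βi : ℕ → (ℕ → ∀ j, A j) → (ℕ → X i) → A i → ℝ) {t : ℕ}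
    (ht : t < T) (ah : ℕ → ∀ j, A j) (xh : ℕ → X i) (xc : ∀ j, X j) :
    cont N T X A Q1 Qk R θ i βi t ah xh xc
      = ∑ a : ∀ j, A j, ∑ x' : ∀ j, X j,
        (βi t ah xh (a i) *
          ∏ j ∈ univ.erase i, θ t (μstar N X A Q1 Qk θ t ah) j (xc j) (a j)) *
        (∏ j, Qk (t + 1) j (xc j) a (x' j)) *
        (R i xc a +
          cont N T X A Q1 Qk R θ i βi (t + 1) (upd ah t a) (upd xh (t + 1) (x' i)) x') := by
  rw [cont, dif_pos ht]

theorem contVal_of_le (i : Fin N) (βi : ℕ → (ℕ → ∀ j, A j) → (ℕ → X i) → A i → ℝ) {t : ℕ}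
    (ht : T ≤ t) (ah : ℕ → ∀ j, A j) (xh : ℕ → X i) (μ : ∀ j, X j → ℝ) :
    contVal N T X A Q1 Qk R θ i βi t ah xh μ = 0 :=
  sum_eq_zero fun xc _ => by rw [cont, dif_neg (not_lt.2 ht), mul_zero]

theorem V_eq_Obj {t : ℕ} (ht : t < T) (π : ∀ j, X j → ℝ) (i : Fin N) (xi : X i) :
    V N T X A Qk R θ t π i xi = Obj N T X A Qk R θ t π i xi (θ t π i xi) := by
  rw [V, dif_pos ht]
  refine sum_congr rfl fun x _ => sum_congr rfl fun a _ => sum_congr rfl fun xi' _ => ?_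
  split_ifs with h
  · rw [← mul_prod_erase univ (fun j => θ t π j (x j) (a j)) (mem_univ i), h]
  · simp only [zero_mul]

theorem Obj_eq_stageValue (hK : KerStoch N X A Q1 Qk) (t : ℕ) (π : ∀ j, X j → ℝ) (i : Fin N)
    (xi : X i) (p : A i → ℝ) :
    Obj N T X A Qk R θ t π i xi p = stageValue N X A Qk R θ t π i xi p
      fun a xi' => V N T X A Qk R θ (t + 1) (Fupd N X A Qk (t + 1) π (θ t π) a) i xi' := by
  unfold Obj stageValue
  rw [sum_comm]
  refine sum_congr rfl fun a _ => ?_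
  set w := fun x : ∀ j, X j => (if x i = xi then ∏ j ∈ univ.erase i, π j (x j) else 0) *
    ∏ j ∈ univ.erase i, θ t π j (x j) (a j)
  have hQ : ∀ x : ∀ j, X j, ∑ xi', Qk (t + 1) i xi a xi' = 1 := fun _ => (hK.2 _ _ _ _).2
  calc _ = p (a i) * ∑ x, ∑ xi', w x * Qk (t + 1) i xi a xi' *
        (R i x a + V N T X A Qk R θ (t + 1) (Fupd N X A Qk (t + 1) π (θ t π) a) i xi') := by
        simp_rw [mul_sum]
        exact sum_congr rfl fun _ _ => sum_congr rfl fun _ _ => by ring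
    _ = _ := by
        rw [sum_sum_kernel_mul_add _ _ _ _ hQ]
        simp_rw [← sum_mul, w, sum_ite_prod_mul_prod_θ, mul_sum, mul_assoc]

theorem contVal_μstar_eq_stageValue (hK : KerStoch N X A Q1 Qk) (hθ : ThetaStoch N X A θ)
    (i : Fin N) (βi : ℕ → (ℕ → ∀ j, A j) → (ℕ → X i) → A i → ℝ) {t : ℕ} (ht : t < T)
    (ah : ℕ → ∀ j, A j) (xh : ℕ → X i) :
    contVal N T X A Q1 Qk R θ i βi t ah xh (μstar N X A Q1 Qk θ t ah)
      = stageValue N X A Qk R θ t (μstar N X A Q1 Qk θ t ah) i (xh t) (βi t ah xh)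
          fun a xi' => contVal N T X A Q1 Qk R θ i βi (t + 1) (upd ah t a) (upd xh (t + 1) xi')
            (μstar N X A Q1 Qk θ (t + 1) (upd ah t a)) := by
  have hπ := isBelief_μstar hK hθ t ah
  have hK1 : ∀ (x : ∀ j, X j) (a : ∀ j, A j),
      ∑ x' : ∀ j, X j, ∏ j, Qk (t + 1) j (x j) a (x' j) = 1 := fun x a => by
    rw [← Fintype.prod_sum]
    exact prod_eq_one fun j _ => (hK.2 _ _ _ _).2
  unfold contVal
  simp_rw [cont_of_lt i βi ht, μstar_succ_upd, upd_self]
  set π := μstar N X A Q1 Qk θ t ah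
  set w := fun (a : ∀ j, A j) (x : ∀ j, X j) =>
    (if x i = xh t then ∏ j ∈ univ.erase i, π j (x j) else 0) *
      ∏ j ∈ univ.erase i, θ t π j (x j) (a j)
  set C := fun (a : ∀ j, A j) (x' : ∀ j, X j) =>
    cont N T X A Q1 Qk R θ i βi (t + 1) (upd ah t a) (upd xh (t + 1) (x' i)) x'
  calc _ = ∑ a, βi t ah xh (a i) * ∑ x, ∑ x', w a x * (∏ j, Qk (t + 1) j (x j) a (x' j)) *
        (R i x a + C a x') := by
        simp_rw [mul_sum]
        rw [sum_comm]
        exact sum_congr rfl fun _ _ => sum_congr rfl fun _ _ => sum_congr rfl fun _ _ => by ring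
    _ = ∑ a, βi t ah xh (a i) * (∑ x, w a x * R i x a +
          ∑ x', (∑ x, w a x * ∏ j, Qk (t + 1) j (x j) a (x' j)) * C a x') :=
        sum_congr rfl fun a _ => by rw [sum_sum_kernel_mul_add _ _ _ _ fun x => hK1 x a]
    _ = _ := sum_congr rfl fun a _ => by
        simp_rw [w, sum_ite_prod_mul_prod_θ_mul_prod_Qk (fun j => (hπ j).1)
          (fun j y => (hθ t π hπ j y).1), prod_mul_distrib]
        rw [← sum_mul_prod_erase_fiber i (Qk (t + 1) i (xh t) a)
          (Fupd N X A Qk (t + 1) π (θ t π) a) fun y x' =>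
            cont N T X A Q1 Qk R θ i βi (t + 1) (upd ah t a) (upd xh (t + 1) y) x', mul_sum]
        exact congrArg _ (congrArg _ (sum_congr rfl fun _ _ => by ring))

theorem stageValue_mono (hK : KerStoch N X A Q1 Qk) (hθ : ThetaStoch N X A θ) (t : ℕ)
    {π : ∀ j, X j → ℝ} (hπ : IsBelief N X π) (i : Fin N) (xi : X i) {p : A i → ℝ}
    (hp : ∀ b, 0 ≤ p b) {W W' : (∀ j, A j) → X i → ℝ} (hW : ∀ a xi', W a xi' ≤ W' a xi') :
    stageValue N X A Qk R θ t π i xi p W ≤ stageValue N X A Qk R θ t π i xi p W' := by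
  unfold stageValue
  gcongr with a _ xi' _
  · exact hp _
  · exact prod_nonneg fun j _ => sum_nonneg fun y _ => mul_nonneg ((hπ j).1 y) ((hθ t π hπ j y).1 _)
  · exact (hK.2 _ _ _ _).1 _
  · exact hW _ _

theorem contVal_βeq_μstar_eq_V (hK : KerStoch N X A Q1 Qk) (hθ : ThetaStoch N X A θ) (i : Fin N)
    (t : ℕ) (ah : ℕ → ∀ j, A j) (xh : ℕ → X i) :
    contVal N T X A Q1 Qk R θ i (βeq N X A Q1 Qk θ i) t ah xh (μstar N X A Q1 Qk θ t ah)
      = V N T X A Qk R θ t (μstar N X A Q1 Qk θ t ah) i (xh t) := by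
  by_cases ht : t < T
  · rw [contVal_μstar_eq_stageValue hK hθ i _ ht, V_eq_Obj ht, Obj_eq_stageValue hK]
    congr 1
    funext a xi'
    rw [contVal_βeq_μstar_eq_V hK hθ i (t + 1), μstar_succ_upd, upd_self]
  · rw [contVal_of_le i _ (not_lt.1 ht), V, dif_neg ht]
termination_by T - t

theorem contVal_le_V (hK : KerStoch N X A Q1 Qk) (hθ : ThetaStoch N X A θ)
    (hFP : FixedPoint N T X A Qk R θ) (i : Fin N)
    {βi : ℕ → (ℕ → ∀ j, A j) → (ℕ → X i) → A i → ℝ}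
    (hβ : ∀ n a' x', (∀ b, 0 ≤ βi n a' x' b) ∧ (∑ b, βi n a' x' b) = 1)
    (t : ℕ) (ah : ℕ → ∀ j, A j) (xh : ℕ → X i) :
    contVal N T X A Q1 Qk R θ i βi t ah xh (μstar N X A Q1 Qk θ t ah)
      ≤ V N T X A Qk R θ t (μstar N X A Q1 Qk θ t ah) i (xh t) := by
  by_cases ht : t < T
  · have hπ := isBelief_μstar hK hθ t ah
    calc _ = _ := contVal_μstar_eq_stageValue hK hθ i βi ht ah xh
      _ ≤ _ := stageValue_mono hK hθ t hπ i (xh t) (hβ t ah xh).1 fun a xi' => by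
          simpa only [μstar_succ_upd, upd_self] using
            contVal_le_V hK hθ hFP i hβ (t + 1) (upd ah t a) (upd xh (t + 1) xi')
      _ = _ := (Obj_eq_stageValue hK ..).symm
      _ ≤ _ := hFP t ht _ hπ i (xh t) _ (hβ t ah xh).1 (hβ t ah xh).2
      _ = _ := (V_eq_Obj ht ..).symm
  · rw [contVal_of_le i _ (not_lt.1 ht), V, dif_neg ht]
termination_by T - t

end

/-- the backward-forward construction yields a PBE: if the equilibrium
generating function `θ` solves the backward fixed-point equations, then the strategy
profile `β*` and beliefs `μ*` defined by the forward recursion form a perfect Bayesian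
equilibrium: at every period `t`, public history and private history, no player can
improve its expected continuation reward by any unilateral deviation. -/
theorem backward_forward_gives_PBE
    (hK : KerStoch N X A Q1 Qk)
    (hθ : ThetaStoch N X A θ)
    (hFP : FixedPoint N T X A Qk R θ) :
    ∀ (i : Fin N) (t : ℕ), t ≤ T →
    ∀ (ah : ℕ → ∀ j, A j) (xh : ℕ → X i)
      (βi : ℕ → (ℕ → ∀ j, A j) → (ℕ → X i) → A i → ℝ),
      (∀ n a' x', (∀ b, 0 ≤ βi n a' x' b) ∧ (∑ b, βi n a' x' b) = 1) →
      contVal N T X A Q1 Qk R θ i βi t ah xh (μstar N X A Q1 Qk θ t ah)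
        ≤ contVal N T X A Q1 Qk R θ i (βeq N X A Q1 Qk θ i) t ah xh
            (μstar N X A Q1 Qk θ t ah) := by
  intro i t _ ah xh βi hβ
  exact (contVal_le_V hK hθ hFP i hβ t ah xh).trans (contVal_βeq_μstar_eq_V hK hθ i t ah xh).ge

end SPBE
end
end

section
/- (Marginal posterior of one player's type is unaffected by another player's strategy.) In the dynamic game with conditionally independent Markovian types, for any two strategy profiles g and ĝ that agree on player j's strategy (g^j = ĝ^j), and any public history a_{1:t-1} with positive probability under both, the conditional distribution of player j's type history coincides: P^g(x_{1:t}^j | a_{1:t-1}) = P^{ĝ}(x_{1:t}^j | a_{1:t-1}). In particular, a unilateral deviation by player i ≠ j does not alter the common belief about player j's type given the realized public history. -/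
open scoped Classical BigOperators

noncomputable section

namespace DynGame

variable (N T : ℕ) (X A : Fin N → Type)
  [∀ i, Fintype (X i)] [∀ i, Fintype (A i)]

/-- A (behavioral) strategy profile: player `i` at time `t` sees the public action
history and its own private type history and randomizes over its actions. -/
abbrev Strat := ∀ i : Fin N, Fin T → (Fin T → ∀ j, A j) → (Fin T → X i) → A i → ℝ

/-- Probability of a full trajectory `(x_{1:T}, a_{1:T})` under the prior `Q1`,
the conditionally independent controlled Markov kernels `Qk` and the profile `g`. -/
def trajP (Q1 : ∀ i, X i → ℝ)
    (Qk : ∀ i, Fin T → X i → (∀ j, A j) → X i → ℝ)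
    (g : Strat N T X A)
    (x : Fin T → ∀ i, X i) (a : Fin T → ∀ i, A i) : ℝ :=
  (if h : 0 < T then ∏ i, Q1 i (x ⟨0, h⟩ i) else 1) *
  ∏ t : Fin T,
    ((∏ i, g i t a (fun s => x s i) (a t i)) *
     ∏ i, (if h : (t : ℕ) + 1 < T then
              Qk i ⟨(t : ℕ) + 1, h⟩ (x t i) (a t) (x ⟨(t : ℕ) + 1, h⟩ i) else 1))

/-- Causality: the strategy depends only on the strict past of public actions and the
past (including present) of the player's own types. -/
def Causal (g : Strat N T X A) : Prop :=
  ∀ i (t : Fin T) a a' xi xi',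
    (∀ s : Fin T, (s : ℕ) < (t : ℕ) → a s = a' s) →
    (∀ s : Fin T, (s : ℕ) ≤ (t : ℕ) → xi s = xi' s) →
    g i t a xi = g i t a' xi'

/-- The strategy profile is made of probability distributions. -/
def Stochastic (g : Strat N T X A) : Prop :=
  ∀ i t a xi, (∀ b, 0 ≤ g i t a xi b) ∧ (∑ b, g i t a xi b) = 1

def StochKer (Q1 : ∀ i, X i → ℝ) (Qk : ∀ i, Fin T → X i → (∀ j, A j) → X i → ℝ) : Prop :=
  (∀ i, (∀ x, 0 ≤ Q1 i x) ∧ (∑ x, Q1 i x) = 1) ∧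
  (∀ i t x a, (∀ x', 0 ≤ Qk i t x a x') ∧ (∑ x', Qk i t x a x') = 1)

variable (Q1 : ∀ i, X i → ℝ) (Qk : ∀ i, Fin T → X i → (∀ j, A j) → X i → ℝ)

/-- Marginal probability of the public action history `a_{1:t-1}`
(indices `s` with `s+1 ≤ t-1 <-> s+1 < t` in 0-based time). -/
def aMarg (g : Strat N T X A) (t : ℕ) (a : Fin T → ∀ i, A i) : ℝ :=
  ∑ x' : Fin T → ∀ i, X i, ∑ a' : Fin T → ∀ i, A i,
    if (∀ s : Fin T, (s : ℕ) + 1 < t → a' s = a s) then trajP N T X A Q1 Qk g x' a' else 0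

/-- Joint probability of `(x_{1:t}, a_{1:t-1})`. -/
def xaMarg (g : Strat N T X A) (t : ℕ) (x : Fin T → ∀ i, X i) (a : Fin T → ∀ i, A i) : ℝ :=
  ∑ x' : Fin T → ∀ i, X i, ∑ a' : Fin T → ∀ i, A i,
    if (∀ s : Fin T, (s : ℕ) + 1 < t → a' s = a s) ∧ (∀ s : Fin T, (s : ℕ) < t → x' s = x s)
    then trajP N T X A Q1 Qk g x' a' else 0

/-- Joint conditional `P^g(x_{1:t} | a_{1:t-1})`. -/
def condJoint (g : Strat N T X A) (t : ℕ) (x : Fin T → ∀ i, X i) (a : Fin T → ∀ i, A i) : ℝ :=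
  xaMarg N T X A Q1 Qk g t x a / aMarg N T X A Q1 Qk g t a

/-- Probability of `(x_{1:t}^i, a_{1:t-1})` for a single player `i`. -/
def xiMarg (g : Strat N T X A) (i : Fin N) (t : ℕ) (xi : Fin T → X i)
    (a : Fin T → ∀ i, A i) : ℝ :=
  ∑ x' : Fin T → ∀ i, X i, ∑ a' : Fin T → ∀ i, A i,
    if (∀ s : Fin T, (s : ℕ) + 1 < t → a' s = a s) ∧ (∀ s : Fin T, (s : ℕ) < t → x' s i = xi s)
    then trajP N T X A Q1 Qk g x' a' else 0

/-- Player-`i` marginal conditional `P^g(x_{1:t}^i | a_{1:t-1})`. -/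
def condI (g : Strat N T X A) (i : Fin N) (t : ℕ) (xi : Fin T → X i)
    (a : Fin T → ∀ i, A i) : ℝ :=
  xiMarg N T X A Q1 Qk g i t xi a / aMarg N T X A Q1 Qk g t a

/-!
The future of a trajectory (types from time `t` on, actions from time `t - 1` on) can be summed
out one variable at a time, backwards from the horizon: the last remaining strategy or kernel
factor is a probability distribution in the variable being summed out, and by causality no other
factor depends on that variable. What remains, at the observed actions `a`, is a product over the
players of weights each involving only that player's strategy and types. So
`P^g(x^j_{1:t}, a_{1:t-1})` and `P^g(a_{1:t-1})` share the factor contributed by the players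
`i ≠ j`, which cancels in the posterior, and the factor of player `j` involves `g^j` alone.
-/

theorem _root_.Fintype.sum_eq_sum_of_sum_update_eq {κ β M : Type*} [Fintype κ]
    [DecidableEq κ] [Fintype β] [AddCommMonoid M] {F G : (κ → β) → M} (u : κ)
    (h : ∀ f, ∑ b, F (Function.update f u b) = ∑ b, G (Function.update f u b)) :
    ∑ f, F f = ∑ f, G f := by
  have split : ∀ H : (κ → β) → M,
      ∑ f, H f = ∑ r, ∑ b, H ((Equiv.funSplitAt u β).symm (b, r)) := fun H => by
    rw [← (Equiv.funSplitAt u β).symm.sum_comp, Fintype.sum_prod_type_right]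
  rw [split F, split G]
  refine Finset.sum_congr rfl fun r _ => ?_
  cases isEmpty_or_nonempty β
  · simp
  · have hupd : ∀ b,
        Function.update ((Equiv.funSplitAt u β).symm (Classical.arbitrary β, r)) u b
          = (Equiv.funSplitAt u β).symm (b, r) := fun b => by
      ext k
      by_cases hk : k = u
      · subst hk; simp [Equiv.funSplitAt_symm_apply]
      · simp [Equiv.funSplitAt_symm_apply, hk]
    simpa only [hupd] using h ((Equiv.funSplitAt u β).symm (Classical.arbitrary β, r))

theorem _root_.Fintype.sum_mul_eq_sum_mul_of_update {κ β R : Type*} [Fintype κ]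
    [DecidableEq κ] [Fintype β] [CommSemiring R] {F k k' : (κ → β) → R} (u : κ)
    (hF : ∀ f b, F (Function.update f u b) = F f)
    (hk : ∀ f, ∑ b, k (Function.update f u b) = ∑ b, k' (Function.update f u b)) :
    ∑ f, F f * k f = ∑ f, F f * k' f :=
  Fintype.sum_eq_sum_of_sum_update_eq u fun f => by
    simp only [hF, ← Finset.mul_sum, hk]

theorem _root_.Fintype.sum_prod_piComm {κ ι R : Type*} [Fintype κ] [DecidableEq κ]
    [Fintype ι] [DecidableEq ι] {β : ι → Type*} [∀ i, Fintype (β i)] [CommSemiring R]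
    (f : ∀ i, (κ → β i) → R) :
    ∑ x : κ → ∀ i, β i, ∏ i, f i (fun k => x k i) = ∏ i, ∑ y, f i y := by
  rw [Fintype.prod_sum]
  exact Fintype.sum_equiv (Equiv.piComm fun _ i => β i) _ _ fun _ => rfl

theorem _root_.Fintype.sum_mul_prod_piComm {κ ι R : Type*} [Fintype κ] [DecidableEq κ]
    [Fintype ι] [DecidableEq ι] {β : ι → Type*} [∀ i, Fintype (β i)] [CommSemiring R]
    (f : ∀ i, (κ → β i) → R) (j : ι) (ψ : (κ → β j) → R) :
    ∑ x : κ → ∀ i, β i, ψ (fun k => x k j) * ∏ i, f i (fun k => x k i)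
      = (∑ y, ψ y * f j y) * ∏ i ∈ Finset.univ.erase j, ∑ y, f i y := by
  set f' := Function.update f j fun y => ψ y * f j y
  have hprod : ∀ x : κ → ∀ i, β i,
      ψ (fun k => x k j) * ∏ i, f i (fun k => x k i) = ∏ i, f' i (fun k => x k i) :=
    fun x => by
    rw [← Finset.mul_prod_erase _ _ (Finset.mem_univ j),
      ← Finset.mul_prod_erase _ _ (Finset.mem_univ j), ← mul_assoc]
    congr 1
    · simp [f']
    · exact Finset.prod_congr rfl fun i hi => by simp [f', Finset.ne_of_mem_erase hi]
  rw [Fintype.sum_congr _ _ hprod, Fintype.sum_prod_piComm,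
    ← Finset.mul_prod_erase _ _ (Finset.mem_univ j)]
  congr 1
  · simp [f']
  · exact Finset.prod_congr rfl fun i hi => by simp [f', Finset.ne_of_mem_erase hi]

theorem _root_.Function.update_eval {κ ι : Type*} {β : ι → Type*} [DecidableEq κ]
    (x : κ → ∀ i, β i) (c : κ) (z : ∀ i, β i) (i : ι) :
    (fun k => Function.update x c z k i) = Function.update (fun k => x k i) c (z i) :=
  funext fun k => Function.apply_update (fun _ w => w i) x c z k

section HybridWeight

variable {N T X A}

/- In `hybridWeight g ab nG nQ` the strategy factors at times `s ≥ nG` and the kernel factors of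
the transitions `s → s + 1` with `s ≥ nQ` are replaced by point masses, at `ab s` for actions and
at the initial type for types, so that partially summed-out weights are still functions of whole
trajectories. Pinning to the initial type rather than to `y s` keeps a pinned factor independent
of the type summed out next. -/
def initFactor {i : Fin N} (y : Fin T → X i) : ℝ :=
  if h : 0 < T then Q1 i (y ⟨0, h⟩) else 1

def stratFactor {i : Fin N} (gi : Fin T → (Fin T → ∀ j, A j) → (Fin T → X i) → A i → ℝ)
    (ab : Fin T → ∀ j, A j) (nG : ℕ) (s : Fin T) (y : Fin T → X i)
    (a : Fin T → ∀ j, A j) : ℝ :=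
  if (s : ℕ) < nG then gi s a y (a s i) else if a s i = ab s i then 1 else 0

def kernelFactor (nQ : ℕ) {i : Fin N} (s : Fin T) (y : Fin T → X i)
    (a : Fin T → ∀ j, A j) : ℝ :=
  if h : (s : ℕ) + 1 < T then
    if (s : ℕ) < nQ then Qk i ⟨s + 1, h⟩ (y s) (a s) (y ⟨s + 1, h⟩)
    else if y ⟨s + 1, h⟩ = y ⟨0, by omega⟩ then 1 else 0
  else 1

def playerWeight {i : Fin N} (gi : Fin T → (Fin T → ∀ j, A j) → (Fin T → X i) → A i → ℝ)
    (ab : Fin T → ∀ j, A j) (nG nQ : ℕ) (y : Fin T → X i) (a : Fin T → ∀ j, A j) : ℝ :=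
  initFactor Q1 y * ∏ s, stratFactor gi ab nG s y a * kernelFactor Qk nQ s y a

def hybridWeight (g : Strat N T X A) (ab : Fin T → ∀ j, A j) (nG nQ : ℕ)
    (x : Fin T → ∀ i, X i) (a : Fin T → ∀ j, A j) : ℝ :=
  ∏ i, playerWeight Q1 Qk (g i) ab nG nQ (fun s => x s i) a

omit [∀ i, Fintype (X i)] [∀ i, Fintype (A i)] in
theorem initFactor_update {i : Fin N} {c : Fin T} (hc : (c : ℕ) ≠ 0) (y : Fin T → X i)
    (z : X i) :
    initFactor Q1 (Function.update y c z) = initFactor Q1 y := by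
  unfold initFactor
  split_ifs
  · rw [Function.update_of_ne fun h => hc (by rw [← h])]
  · rfl

omit [∀ i, Fintype (X i)] [∀ i, Fintype (A i)] in
theorem stratFactor_update_type {g : Strat N T X A} (hgc : Causal N T X A g) (i : Fin N)
    (ab : Fin T → ∀ j, A j) {nG : ℕ} {s c : Fin T} (h : (s : ℕ) < nG → (s : ℕ) < c)
    (y : Fin T → X i) (z : X i) (a : Fin T → ∀ j, A j) :
    stratFactor (g i) ab nG s (Function.update y c z) a = stratFactor (g i) ab nG s y a := by
  unfold stratFactor
  by_cases hs : (s : ℕ) < nG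
  · rw [if_pos hs, if_pos hs]
    refine congrFun (hgc i s a a _ _ (fun _ _ => rfl) fun n hn => ?_) _
    exact Function.update_of_ne (Fin.ne_of_val_ne (by have := h hs; omega)) _ _
  · rw [if_neg hs, if_neg hs]

omit [∀ i, Fintype (X i)] [∀ i, Fintype (A i)] in
theorem stratFactor_update_action {g : Strat N T X A} (hgc : Causal N T X A g) (i : Fin N)
    (ab : Fin T → ∀ j, A j) {nG : ℕ} {s c : Fin T} (hsc : s ≠ c)
    (h : (s : ℕ) < nG → (s : ℕ) < c) (y : Fin T → X i) (a : Fin T → ∀ j, A j) (b : ∀ j, A j) :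
    stratFactor (g i) ab nG s y (Function.update a c b) = stratFactor (g i) ab nG s y a := by
  unfold stratFactor
  rw [Function.update_of_ne hsc]
  by_cases hs : (s : ℕ) < nG
  · rw [if_pos hs, if_pos hs]
    refine congrFun (hgc i s _ a y y (fun n hn => ?_) fun _ _ => rfl) _
    exact Function.update_of_ne (Fin.ne_of_val_ne (by have := h hs; omega)) _ _
  · rw [if_neg hs, if_neg hs]

omit [∀ i, Fintype (X i)] [∀ i, Fintype (A i)] in
theorem kernelFactor_update_type {nQ : ℕ} {i : Fin N} {s c : Fin T} (hc0 : (c : ℕ) ≠ 0)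
    (hcs : (c : ℕ) ≠ s + 1) (h : (s : ℕ) < nQ → (c : ℕ) ≠ s)
    (y : Fin T → X i) (z : X i) (a : Fin T → ∀ j, A j) :
    kernelFactor Qk nQ s (Function.update y c z) a = kernelFactor Qk nQ s y a := by
  unfold kernelFactor
  by_cases h1 : (s : ℕ) + 1 < T
  · have e1 : Function.update y c z ⟨s + 1, h1⟩ = y ⟨s + 1, h1⟩ :=
      Function.update_of_ne (Fin.ne_of_val_ne hcs.symm) _ _
    have e0 : Function.update y c z ⟨0, by omega⟩ = y ⟨0, by omega⟩ :=
      Function.update_of_ne (Fin.ne_of_val_ne hc0.symm) _ _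
    rw [dif_pos h1, dif_pos h1, e1, e0]
    by_cases h2 : (s : ℕ) < nQ
    · rw [if_pos h2, if_pos h2, Function.update_of_ne (Fin.ne_of_val_ne (h h2).symm)]
    · rw [if_neg h2, if_neg h2]
  · rw [dif_neg h1, dif_neg h1]

omit [∀ i, Fintype (X i)] [∀ i, Fintype (A i)] in
theorem kernelFactor_update_action {nQ : ℕ} {i : Fin N} {s c : Fin T}
    (h : (s : ℕ) < nQ → s ≠ c) (y : Fin T → X i) (a : Fin T → ∀ j, A j) (b : ∀ j, A j) :
    kernelFactor Qk nQ s y (Function.update a c b) = kernelFactor Qk nQ s y a := by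
  unfold kernelFactor
  by_cases h2 : (s : ℕ) < nQ
  · simp only [if_pos h2, Function.update_of_ne (h h2)]
  · simp only [if_neg h2]

omit [∀ i, Fintype (A i)] in
theorem sum_kernelFactor_update (hK : StochKer N T X A Q1 Qk) {u : ℕ} (hu : u + 1 < T)
    (nQ : ℕ) {i : Fin N} (y : Fin T → X i) (a : Fin T → ∀ j, A j) :
    ∑ z, kernelFactor Qk nQ (⟨u, by omega⟩ : Fin T) (Function.update y ⟨u + 1, hu⟩ z) a = 1 := by
  have hu1 : (⟨u, by omega⟩ : Fin T) ≠ ⟨u + 1, hu⟩ := Fin.ne_of_val_ne (by simp)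
  have h01 : (⟨0, by omega⟩ : Fin T) ≠ ⟨u + 1, hu⟩ := Fin.ne_of_val_ne (by simp)
  simp only [kernelFactor, dif_pos hu, Function.update_self, Function.update_of_ne hu1,
    Function.update_of_ne h01]
  split_ifs
  · exact (hK.2 i _ _ _).2
  · simp

omit [∀ i, Fintype (X i)] in
theorem sum_prod_stratFactor_update {g : Strat N T X A} (hg : Stochastic N T X A g)
    (hgc : Causal N T X A g) (ab : Fin T → ∀ j, A j) (nG : ℕ) (c : Fin T)
    (x : Fin T → ∀ i, X i) (a : Fin T → ∀ j, A j) :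
    ∑ b, ∏ i, stratFactor (g i) ab nG c (fun s => x s i) (Function.update a c b) = 1 := by
  have hb : ∀ b i, stratFactor (g i) ab nG c (fun s => x s i) (Function.update a c b)
      = if (c : ℕ) < nG then g i c a (fun s => x s i) (b i)
        else if b i = ab c i then 1 else 0 := fun b i => by
    simp only [stratFactor, Function.update_self]
    refine if_congr Iff.rfl (congrFun (hgc i c _ a _ _ (fun n hn => ?_) fun _ _ => rfl) _) rfl
    exact Function.update_of_ne (ne_of_lt (show n < c from hn)) _ _
  calc ∑ b, ∏ i, stratFactor (g i) ab nG c (fun s => x s i) (Function.update a c b)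
      = ∑ b : ∀ j, A j, ∏ i, if (c : ℕ) < nG then g i c a (fun s => x s i) (b i)
          else if b i = ab c i then 1 else 0 := by simp only [hb]
    _ = ∏ i, ∑ b, if (c : ℕ) < nG then g i c a (fun s => x s i) b
          else if b = ab c i then 1 else 0 := (Fintype.prod_sum fun i (b : A i) =>
          if (c : ℕ) < nG then g i c a (fun s => x s i) b else if b = ab c i then 1 else 0).symm
    _ = 1 := Finset.prod_eq_one fun i _ => by
      split_ifs
      · exact (hg i c a _).2
      · simp

omit [∀ i, Fintype (X i)] [∀ i, Fintype (A i)] in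
theorem stratFactor_congr {i : Fin N}
    (gi : Fin T → (Fin T → ∀ j, A j) → (Fin T → X i) → A i → ℝ) (ab : Fin T → ∀ j, A j)
    {nG nG' : ℕ} {s : Fin T} (h : (s : ℕ) < nG ↔ (s : ℕ) < nG') :
    stratFactor gi ab nG s = stratFactor gi ab nG' s := by
  funext y a
  simp only [stratFactor, h]

omit [∀ i, Fintype (X i)] [∀ i, Fintype (A i)] in
theorem kernelFactor_congr {nQ nQ' : ℕ} {i : Fin N} {s : Fin T}
    (h : (s : ℕ) + 1 < T → ((s : ℕ) < nQ ↔ (s : ℕ) < nQ')) :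
    kernelFactor Qk nQ s (i := i) = kernelFactor Qk nQ' s := by
  funext y a
  unfold kernelFactor
  by_cases h1 : (s : ℕ) + 1 < T
  · simp only [dif_pos h1, h h1]
  · simp only [dif_neg h1]

omit [∀ i, Fintype (X i)] [∀ i, Fintype (A i)] in
theorem hybridWeight_congr (g : Strat N T X A) (ab : Fin T → ∀ j, A j) {nG nG' nQ nQ' : ℕ}
    (hG : ∀ s : Fin T, (s : ℕ) < nG ↔ (s : ℕ) < nG')
    (hQ : ∀ s : Fin T, (s : ℕ) + 1 < T → ((s : ℕ) < nQ ↔ (s : ℕ) < nQ')) :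
    hybridWeight Q1 Qk g ab nG nQ = hybridWeight Q1 Qk g ab nG' nQ' := by
  funext x a
  simp only [hybridWeight, playerWeight, stratFactor_congr _ _ (hG _),
    kernelFactor_congr Qk (hQ _)]

omit [∀ i, Fintype (X i)] [∀ i, Fintype (A i)] in
theorem playerWeight_eq_mul_kernelFactor {i : Fin N}
    (gi : Fin T → (Fin T → ∀ j, A j) → (Fin T → X i) → A i → ℝ) (ab : Fin T → ∀ j, A j)
    (nG nQ : ℕ) (s₀ : Fin T) (y : Fin T → X i) (a : Fin T → ∀ j, A j) :
    playerWeight Q1 Qk gi ab nG nQ y a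
      = initFactor Q1 y * (∏ s, stratFactor gi ab nG s y a) *
          (∏ s ∈ Finset.univ.erase s₀, kernelFactor Qk nQ s y a) *
            kernelFactor Qk nQ s₀ y a := by
  rw [playerWeight, Finset.prod_mul_distrib,
    ← Finset.mul_prod_erase _ (fun s => kernelFactor Qk nQ s y a) (Finset.mem_univ s₀)]
  ring

omit [∀ i, Fintype (X i)] [∀ i, Fintype (A i)] in
theorem playerWeight_eq_mul_stratFactor {i : Fin N}
    (gi : Fin T → (Fin T → ∀ j, A j) → (Fin T → X i) → A i → ℝ) (ab : Fin T → ∀ j, A j)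
    (nG nQ : ℕ) (s₀ : Fin T) (y : Fin T → X i) (a : Fin T → ∀ j, A j) :
    playerWeight Q1 Qk gi ab nG nQ y a
      = initFactor Q1 y * (∏ s ∈ Finset.univ.erase s₀, stratFactor gi ab nG s y a) *
          (∏ s, kernelFactor Qk nQ s y a) * stratFactor gi ab nG s₀ y a := by
  rw [playerWeight, Finset.prod_mul_distrib, ← Finset.mul_prod_erase _ _ (Finset.mem_univ s₀)]
  ring

omit [∀ i, Fintype (A i)] in
theorem sum_mul_hybridWeight_kernel_step (hK : StochKer N T X A Q1 Qk) {g : Strat N T X A}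
    (hgc : Causal N T X A g) (ab : Fin T → ∀ j, A j) {u : ℕ} (hu : u + 1 < T)
    (C : (Fin T → ∀ i, X i) → ℝ) (hC : ∀ x z, C (Function.update x ⟨u + 1, hu⟩ z) = C x)
    (a : Fin T → ∀ j, A j) :
    ∑ x, C x * hybridWeight Q1 Qk g ab (u + 1) (u + 1) x a
      = ∑ x, C x * hybridWeight Q1 Qk g ab (u + 1) u x a := by
  set s₀ : Fin T := ⟨u, by omega⟩
  set R : (Fin T → ∀ i, X i) → ℝ := fun x => ∏ i, initFactor Q1 (fun s => x s i) *
    (∏ s, stratFactor (g i) ab (u + 1) s (fun s => x s i) a) *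
    ∏ s ∈ Finset.univ.erase s₀, kernelFactor Qk u s (fun s => x s i) a
  set K : ℕ → (Fin T → ∀ i, X i) → ℝ := fun nQ x =>
    ∏ i, kernelFactor Qk nQ s₀ (fun s => x s i) a
  have hsplit : ∀ nQ, u ≤ nQ → nQ ≤ u + 1 → ∀ x,
      hybridWeight Q1 Qk g ab (u + 1) nQ x a = R x * K nQ x := fun nQ h1 h2 x => by
    simp only [hybridWeight, playerWeight_eq_mul_kernelFactor _ _ _ _ _ _ s₀,
      Finset.prod_mul_distrib, R, K]
    congr 2
    refine Finset.prod_congr rfl fun i _ => Finset.prod_congr rfl fun s hs => ?_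
    have : (s : ℕ) ≠ u := fun e => Finset.ne_of_mem_erase hs (Fin.ext e)
    rw [kernelFactor_congr Qk fun _ => (by omega : (s : ℕ) < nQ ↔ (s : ℕ) < u)]
  have hR : ∀ x z, R (Function.update x ⟨u + 1, hu⟩ z) = R x := fun x z => by
    refine Finset.prod_congr rfl fun i _ => ?_
    rw [Function.update_eval, initFactor_update Q1 (Nat.succ_ne_zero u)]
    congr 1
    · congr 1
      exact Finset.prod_congr rfl fun s _ =>
        stratFactor_update_type hgc i ab (nG := u + 1) (c := ⟨u + 1, hu⟩) id _ _ _
    · refine Finset.prod_congr rfl fun s hs => kernelFactor_update_type Qk (Nat.succ_ne_zero u)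
        ?_ (fun _ => ?_) _ _ _ <;>
      · have : (s : ℕ) ≠ u := fun e => Finset.ne_of_mem_erase hs (Fin.ext e)
        show u + 1 ≠ _
        omega
  have hKsum : ∀ x nQ, ∑ z, K nQ (Function.update x ⟨u + 1, hu⟩ z) = 1 := fun x nQ => by
    simp only [K, Function.update_eval]
    rw [← Fintype.prod_sum fun i z =>
      kernelFactor Qk nQ s₀ (Function.update (fun s => x s i) ⟨u + 1, hu⟩ z) a]
    exact Finset.prod_eq_one fun i _ => sum_kernelFactor_update Q1 Qk hK hu nQ _ a
  simp only [hsplit (u + 1) (by omega) le_rfl, hsplit u le_rfl (by omega), ← mul_assoc]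
  exact Fintype.sum_mul_eq_sum_mul_of_update ⟨u + 1, hu⟩ (fun x z => by rw [hC, hR])
    fun x => by rw [hKsum, hKsum]

omit [∀ i, Fintype (X i)] in
theorem sum_mul_hybridWeight_strat_step {g : Strat N T X A} (hg : Stochastic N T X A g)
    (hgc : Causal N T X A g) (ab : Fin T → ∀ j, A j) {u : ℕ} (hu : u < T)
    (D : (Fin T → ∀ j, A j) → ℝ) (hD : ∀ a b, D (Function.update a ⟨u, hu⟩ b) = D a)
    (x : Fin T → ∀ i, X i) :
    ∑ a, D a * hybridWeight Q1 Qk g ab (u + 1) u x a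
      = ∑ a, D a * hybridWeight Q1 Qk g ab u u x a := by
  set c : Fin T := ⟨u, hu⟩
  set R : (Fin T → ∀ j, A j) → ℝ := fun a => ∏ i, initFactor Q1 (fun s => x s i) *
    (∏ s ∈ Finset.univ.erase c, stratFactor (g i) ab u s (fun s => x s i) a) *
    ∏ s, kernelFactor Qk u s (fun s => x s i) a
  set S : ℕ → (Fin T → ∀ j, A j) → ℝ := fun nG a =>
    ∏ i, stratFactor (g i) ab nG c (fun s => x s i) a
  have hsplit : ∀ nG, u ≤ nG → nG ≤ u + 1 → ∀ a,
      hybridWeight Q1 Qk g ab nG u x a = R a * S nG a := fun nG h1 h2 a => by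
    simp only [hybridWeight, playerWeight_eq_mul_stratFactor _ _ _ _ _ _ c,
      Finset.prod_mul_distrib, R, S]
    congr 3
    refine Finset.prod_congr rfl fun i _ => Finset.prod_congr rfl fun s hs => ?_
    have : (s : ℕ) ≠ u := fun e => Finset.ne_of_mem_erase hs (Fin.ext e)
    rw [stratFactor_congr _ _ (by omega : (s : ℕ) < nG ↔ (s : ℕ) < u)]
  have hR : ∀ a b, R (Function.update a c b) = R a := fun a b => by
    refine Finset.prod_congr rfl fun i _ => ?_
    congr 1
    · congr 1
      exact Finset.prod_congr rfl fun s hs => stratFactor_update_action hgc i ab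
        (Finset.ne_of_mem_erase hs) id _ _ _
    · exact Finset.prod_congr rfl fun s _ => kernelFactor_update_action Qk (nQ := u) (c := c)
        (fun h => Fin.ne_of_val_ne (Nat.ne_of_lt h)) _ _ _
  have hSsum : ∀ a nG, ∑ b, S nG (Function.update a c b) = 1 := fun a nG =>
    sum_prod_stratFactor_update hg hgc ab nG c x a
  simp only [hsplit (u + 1) (by omega) le_rfl, hsplit u le_rfl (by omega), ← mul_assoc]
  exact Fintype.sum_mul_eq_sum_mul_of_update c (fun a b => by rw [hD, hR])
    fun a => by rw [hSsum, hSsum]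

omit [∀ i, Fintype (X i)] [∀ i, Fintype (A i)] in
theorem trajP_eq_hybridWeight (g : Strat N T X A) (ab : Fin T → ∀ j, A j) {nG nQ : ℕ}
    (hG : T ≤ nG) (hQ : T ≤ nQ) :
    trajP N T X A Q1 Qk g = hybridWeight Q1 Qk g ab nG nQ := by
  funext x a
  simp only [trajP, hybridWeight, playerWeight, Finset.prod_mul_distrib]
  rw [Finset.prod_comm (s := Finset.univ (α := Fin N))
      (f := fun i s => stratFactor (g i) ab nG s (fun s => x s i) a),
    Finset.prod_comm (s := Finset.univ (α := Fin N))]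
  congr 1
  · unfold initFactor
    split_ifs <;> simp
  · congr 1
    · exact Finset.prod_congr rfl fun s _ =>
        Finset.prod_congr rfl fun i _ => (if_pos (by omega)).symm
    · refine Finset.prod_congr rfl fun s _ => Finset.prod_congr rfl fun i _ => ?_
      unfold kernelFactor
      by_cases h : (s : ℕ) + 1 < T
      · rw [dif_pos h, dif_pos h, if_pos (by omega)]
      · rw [dif_neg h, dif_neg h]

theorem sum_mul_trajP_eq_sum_mul_hybridWeight (hK : StochKer N T X A Q1 Qk)
    {g : Strat N T X A} (hg : Stochastic N T X A g) (hgc : Causal N T X A g)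
    (ab : Fin T → ∀ j, A j) (r : ℕ) (C : (Fin T → ∀ i, X i) → ℝ)
    (hC : ∀ x (c : Fin T) z, r < (c : ℕ) → C (Function.update x c z) = C x)
    (D : (Fin T → ∀ j, A j) → ℝ)
    (hD : ∀ a (c : Fin T) b, r ≤ (c : ℕ) → D (Function.update a c b) = D a) :
    ∑ x, ∑ a, C x * D a * trajP N T X A Q1 Qk g x a
      = ∑ x, ∑ a, C x * D a * hybridWeight Q1 Qk g ab r r x a := by
  have kernel_step : ∀ u, r ≤ u →
      ∑ x, ∑ a, C x * D a * hybridWeight Q1 Qk g ab (u + 1) (u + 1) x a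
        = ∑ x, ∑ a, C x * D a * hybridWeight Q1 Qk g ab (u + 1) u x a := fun u hru => by
    rcases lt_or_ge (u + 1) T with hu | hu
    · rw [Finset.sum_comm, Finset.sum_congr rfl fun a _ => sum_mul_hybridWeight_kernel_step Q1 Qk
        hK hgc ab hu (fun x => C x * D a) (fun x z => by rw [hC x _ z (Nat.lt_succ_of_le hru)]) a,
        Finset.sum_comm]
    · rw [hybridWeight_congr Q1 Qk g ab (nQ' := u) (fun _ => Iff.rfl) fun s hs => by omega]
  have strat_step : ∀ u, r ≤ u →
      ∑ x, ∑ a, C x * D a * hybridWeight Q1 Qk g ab (u + 1) u x a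
        = ∑ x, ∑ a, C x * D a * hybridWeight Q1 Qk g ab u u x a := fun u hru => by
    rcases lt_or_ge u T with hu | hu
    · exact Finset.sum_congr rfl fun x _ => sum_mul_hybridWeight_strat_step Q1 Qk hg hgc ab hu
        (fun a => C x * D a) (fun a b => by rw [hD a _ b hru]) x
    · rw [hybridWeight_congr Q1 Qk g ab (nG' := u) (fun s => by omega) fun _ _ => Iff.rfl]
  have descent : ∀ u, r ≤ u → ∑ x, ∑ a, C x * D a * hybridWeight Q1 Qk g ab u u x a
      = ∑ x, ∑ a, C x * D a * hybridWeight Q1 Qk g ab r r x a := fun u hru => by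
    induction u, hru using Nat.le_induction with
    | base => rfl
    | succ u hru ih => rw [kernel_step u hru, strat_step u hru, ih]
  rw [← descent (max r T) (le_max_left r T),
    trajP_eq_hybridWeight Q1 Qk g ab (le_max_right r T) (le_max_right r T)]

omit [∀ i, Fintype (X i)] in
theorem sum_indicator_mul_hybridWeight (g : Strat N T X A) (ab : Fin T → ∀ j, A j) (r : ℕ)
    (x : Fin T → ∀ i, X i) :
    ∑ a, (if ∀ s : Fin T, (s : ℕ) < r → a s = ab s then 1 else 0) *
        hybridWeight Q1 Qk g ab r r x a
      = hybridWeight Q1 Qk g ab r r x ab := by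
  rw [Finset.sum_eq_single ab (fun a _ hne => ?_) (by simp), if_pos fun _ _ => rfl, one_mul]
  split_ifs with hpast
  · obtain ⟨s, hs⟩ := Function.ne_iff.mp hne
    obtain ⟨i, hi⟩ := Function.ne_iff.mp hs
    have hsr : ¬ (s : ℕ) < r := fun h => hs (hpast s h)
    refine mul_eq_zero_of_right _ (Finset.prod_eq_zero (Finset.mem_univ i) ?_)
    refine mul_eq_zero_of_right _ (Finset.prod_eq_zero (Finset.mem_univ s) ?_)
    simp [stratFactor, hsr, hi]
  · rw [zero_mul]

def othersMass (g : Strat N T X A) (ab : Fin T → ∀ j, A j) (r : ℕ) (j : Fin N) : ℝ :=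
  ∏ i ∈ Finset.univ.erase j, ∑ y, playerWeight Q1 Qk (g i) ab r r y ab

theorem sum_mul_indicator_mul_trajP_eq (hK : StochKer N T X A Q1 Qk) {g : Strat N T X A}
    (hg : Stochastic N T X A g) (hgc : Causal N T X A g) (j : Fin N) (t : ℕ)
    (ψ : (Fin T → X j) → ℝ) (hψ : ∀ y (c : Fin T) z, t ≤ (c : ℕ) → ψ (Function.update y c z) = ψ y)
    (ab : Fin T → ∀ i, A i) :
    ∑ x, ∑ a, ψ (fun s => x s j) * (if ∀ s : Fin T, (s : ℕ) + 1 < t → a s = ab s then 1 else 0) *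
        trajP N T X A Q1 Qk g x a
      = (∑ y, ψ y * playerWeight Q1 Qk (g j) ab (t - 1) (t - 1) y ab) *
          othersMass Q1 Qk g ab (t - 1) j := by
  have hpast : ∀ s : Fin T, (s : ℕ) + 1 < t ↔ (s : ℕ) < t - 1 := fun s => by omega
  simp only [hpast]
  rw [sum_mul_trajP_eq_sum_mul_hybridWeight Q1 Qk hK hg hgc ab (t - 1) _
    (fun x c z hc => ?_) _ (fun a c b hc => ?_)]
  · simp only [mul_assoc, ← Finset.mul_sum, sum_indicator_mul_hybridWeight]
    exact Fintype.sum_mul_prod_piComm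
      (fun i y => playerWeight Q1 Qk (g i) ab (t - 1) (t - 1) y ab) j ψ
  · rw [Function.update_eval, hψ _ _ _ (by omega)]
  · refine if_congr (forall_congr' fun s => imp_congr_right fun hs => ?_) rfl rfl
    rw [Function.update_of_ne (Fin.ne_of_val_ne (by omega))]

theorem xiMarg_eq (hK : StochKer N T X A Q1 Qk) {g : Strat N T X A}
    (hg : Stochastic N T X A g) (hgc : Causal N T X A g) (j : Fin N) (t : ℕ)
    (xj : Fin T → X j) (ab : Fin T → ∀ i, A i) :
    xiMarg N T X A Q1 Qk g j t xj ab
      = (∑ y, (if ∀ s : Fin T, (s : ℕ) < t → y s = xj s then 1 else 0) *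
            playerWeight Q1 Qk (g j) ab (t - 1) (t - 1) y ab) *
          othersMass Q1 Qk g ab (t - 1) j := by
  rw [← sum_mul_indicator_mul_trajP_eq Q1 Qk hK hg hgc j t _ (fun y c z hc => ?_), xiMarg]
  · refine Finset.sum_congr rfl fun x _ => Finset.sum_congr rfl fun a _ => ?_
    rw [ite_and]
    split_ifs <;> simp
  · refine if_congr (forall_congr' fun s => imp_congr_right fun hs => ?_) rfl rfl
    rw [Function.update_of_ne (Fin.ne_of_val_ne (by omega))]

theorem aMarg_eq (hK : StochKer N T X A Q1 Qk) {g : Strat N T X A}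
    (hg : Stochastic N T X A g) (hgc : Causal N T X A g) (j : Fin N) (t : ℕ)
    (ab : Fin T → ∀ i, A i) :
    aMarg N T X A Q1 Qk g t ab
      = (∑ y, playerWeight Q1 Qk (g j) ab (t - 1) (t - 1) y ab) *
          othersMass Q1 Qk g ab (t - 1) j := by
  have h := sum_mul_indicator_mul_trajP_eq Q1 Qk hK hg hgc j t (fun _ => 1) (fun _ _ _ _ => rfl) ab
  simp only [one_mul] at h
  rw [← h, aMarg]
  refine Finset.sum_congr rfl fun x _ => Finset.sum_congr rfl fun a _ => ?_
  split_ifs <;> simp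

end HybridWeight

theorem marginal_posterior_independent_of_others
    (g ghat : Strat N T X A) (j : Fin N)
    (hK : StochKer N T X A Q1 Qk)
    (hg : Stochastic N T X A g) (hgc : Causal N T X A g)
    (hh : Stochastic N T X A ghat) (hhc : Causal N T X A ghat)
    (hagree : g j = ghat j)
    (t : ℕ)
    (xj : Fin T → X j) (a : Fin T → ∀ i, A i)
    (hpos : 0 < aMarg N T X A Q1 Qk g t a)
    (hpos' : 0 < aMarg N T X A Q1 Qk ghat t a) :
    condI N T X A Q1 Qk g j t xj a = condI N T X A Q1 Qk ghat j t xj a := by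
  rw [aMarg_eq Q1 Qk hK hg hgc j] at hpos
  rw [aMarg_eq Q1 Qk hK hh hhc j] at hpos'
  rw [condI, condI, xiMarg_eq Q1 Qk hK hg hgc, aMarg_eq Q1 Qk hK hg hgc j,
    xiMarg_eq Q1 Qk hK hh hhc, aMarg_eq Q1 Qk hK hh hhc j, hagree,
    mul_div_mul_right _ _ (right_ne_zero_of_mul hpos.ne'),
    mul_div_mul_right _ _ (right_ne_zero_of_mul hpos'.ne')]

end DynGame
end
end
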